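/- Let u : ℝ → ℝ be bounded and continuous, and let a < b be real numbers such that u(x) = −1 for every x ∈ [a,b]. Suppose that ∫_ℝ K(b−y)·(u(y) + u(y)²/2) dy ≤ ∫_ℝ K(a−y)·(u(y) + u(y)²/2) dy. Then u(x) = −1 for every x ∈ ℝ. -/

import Mathlib

/-!
Since `u + u²/2 = (u + 1)²/2 - 1/2` and `K` is odd, the constant `-1/2` contributes nothing, and
the hypothesis reads `∫ (K(b - y) - K(a - y)) g(y) dy ≤ 0` with `g = (u + 1)²/2 ≥ 0`. The weight
`K(b - y) - K(a - y)` is positive off `[a, b]`, while `g` vanishes on `[a, b]`; so the integrand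
is a nonnegative function with nonpositive integral, hence zero almost everywhere. Thus `g = 0`
almost everywhere, and everywhere by continuity.
-/

open MeasureTheory Real

/-- The kernel `K(x) = -sgn(x) e^{-|x|}/2`, the derivative of the Green's function
`G₂(x) = e^{-|x|}/2` of `1 - d²/dx²` on `ℝ`. -/
noncomputable def bbmK (x : ℝ) : ℝ := -Real.sign x * Real.exp (-|x|) / 2

open Set

lemma Real.monotone_sign : Monotone Real.sign := by
  intro x y hxy
  rcases lt_trichotomy x 0 with hx | rfl | hx <;> rcases lt_trichotomy y 0 with hy | rfl | hy <;>
    simp [Real.sign_of_neg, Real.sign_of_pos, *] <;> linarith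

lemma integral_eq_zero_of_odd {G E : Type*} [MeasurableSpace G] [AddGroup G] [MeasurableNeg G]
    [NormedAddCommGroup E] [NormedSpace ℝ E] {μ : Measure G} [μ.IsNegInvariant] {f : G → E}
    (hf : ∀ x, f (-x) = -f x) : ∫ x, f x ∂μ = 0 := by
  have h := integral_neg_eq_self f μ
  simp only [hf, integral_neg] at h
  have h2 : (2 : ℝ) • ∫ x, f x ∂μ = 0 := by
    rw [two_smul]
    nth_rw 1 [← h]
    exact neg_add_cancel _
  exact (smul_eq_zero.mp h2).resolve_left two_ne_zero

lemma bbmK_neg (x : ℝ) : bbmK (-x) = -bbmK x := by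
  simp only [bbmK, Real.sign_neg, abs_neg]
  ring

lemma measurable_bbmK : Measurable bbmK :=
  (Real.monotone_sign.measurable.neg.mul (by fun_prop)).div_const 2

lemma abs_bbmK_le (x : ℝ) : |bbmK x| ≤ (1 + x ^ 2)⁻¹ := by
  have hsign : |Real.sign x| ≤ 1 := by
    rcases Real.sign_apply_eq x with h | h | h <;> simp [h]
  have hexp : (1 + x ^ 2) / 2 ≤ exp |x| := by
    nlinarith [quadratic_le_exp_of_nonneg (abs_nonneg x), sq_abs x, abs_nonneg x]
  calc |bbmK x| = |Real.sign x| * exp (-|x|) / 2 := by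
        rw [bbmK, abs_div, abs_mul, abs_neg, abs_of_pos (exp_pos _), abs_two]
    _ ≤ (exp |x|)⁻¹ / 2 := by
        rw [exp_neg]
        gcongr
        exact mul_le_of_le_one_left (by positivity) hsign
    _ ≤ (1 + x ^ 2)⁻¹ := by
        rw [div_le_iff₀ two_pos, ← inv_le_inv₀ (by positivity) (by positivity), mul_inv, inv_inv,
          inv_inv]
        linarith

lemma integrable_bbmK : Integrable bbmK :=
  integrable_inv_one_add_sq.mono' measurable_bbmK.aestronglyMeasurable
    (ae_of_all _ abs_bbmK_le)

lemma integral_bbmK : ∫ x, bbmK x = 0 :=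
  integral_eq_zero_of_odd bbmK_neg

section Convolution

variable {f : ℝ → ℝ} {C : ℝ}

lemma integrable_bbmK_sub_mul (hf : AEStronglyMeasurable f) (hC : ∀ y, |f y| ≤ C) (x : ℝ) :
    Integrable (fun y ↦ bbmK (x - y) * f y) :=
  (integrable_bbmK.comp_sub_left x).mul_bdd hf (ae_of_all _ hC)

lemma integral_bbmK_sub_mul_add_const (hf : AEStronglyMeasurable f) (hC : ∀ y, |f y| ≤ C)
    (x c : ℝ) : ∫ y, bbmK (x - y) * (f y + c) = ∫ y, bbmK (x - y) * f y := by
  simp_rw [mul_add]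
  rw [integral_add (integrable_bbmK_sub_mul hf hC x)
      ((integrable_bbmK.comp_sub_left x).mul_const c),
    integral_mul_const, integral_sub_left_eq_self bbmK volume x, integral_bbmK, zero_mul,
    add_zero]

end Convolution

lemma bbmK_sub_lt_of_notMem_Icc {a b y : ℝ} (hab : a < b) (hy : y ∉ Icc a b) :
    bbmK (a - y) < bbmK (b - y) := by
  rcases not_and_or.mp hy with hya | hby
  · have ha : 0 < a - y := by linarith [not_le.mp hya]
    have hb : 0 < b - y := by linarith [not_le.mp hya]
    simp only [bbmK, Real.sign_of_pos ha, Real.sign_of_pos hb, abs_of_pos ha, abs_of_pos hb]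
    have : exp (-(b - y)) < exp (-(a - y)) := exp_lt_exp.mpr (by linarith)
    linarith
  · have ha : a - y < 0 := by linarith [not_le.mp hby]
    have hb : b - y < 0 := by linarith [not_le.mp hby]
    simp only [bbmK, Real.sign_of_neg ha, Real.sign_of_neg hb, abs_of_neg ha, abs_of_neg hb]
    have : exp (-(-(a - y))) < exp (-(-(b - y))) := exp_lt_exp.mpr (by linarith)
    linarith

lemma eq_zero_of_integral_mul_nonpos {X : Type*} [TopologicalSpace X] [MeasurableSpace X]
    {μ : Measure X} [μ.IsOpenPosMeasure] {w g : X → ℝ} {s : Set X} (hg : Continuous g)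
    (hg_nonneg : 0 ≤ g) (hgs : EqOn g 0 s) (hw : ∀ x ∉ s, 0 < w x)
    (hint : Integrable (fun x ↦ w x * g x) μ) (hle : ∫ x, w x * g x ∂μ ≤ 0) : g = 0 := by
  have hwg_nonneg : 0 ≤ fun x ↦ w x * g x := fun x ↦ by
    by_cases hx : x ∈ s
    · simp [hgs hx]
    · exact mul_nonneg (hw x hx).le (hg_nonneg x)
  have hwg_ae : (fun x ↦ w x * g x) =ᵐ[μ] 0 :=
    (integral_eq_zero_iff_of_nonneg hwg_nonneg hint).mp
      (le_antisymm hle (integral_nonneg hwg_nonneg))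
  refine (hg.ae_eq_iff_eq μ continuous_zero).mp ?_
  filter_upwards [hwg_ae] with x hx
  by_cases hxs : x ∈ s
  · exact hgs hxs
  · exact (mul_eq_zero.mp hx).resolve_left (hw x hxs).ne'

/-- Time-slice unique continuation for BBM: if a bounded continuous `u` equals `-1` on `[a,b]`
and `∫ K(b-y)(u+u²/2) dy ≤ ∫ K(a-y)(u+u²/2) dy` (i.e. `∂ₜu(b,t₀) ≥ ∂ₜu(a,t₀)`), then
`u ≡ -1`. -/
theorem bbm_unique_continuation (u : ℝ → ℝ)
    (hbdd : ∃ C : ℝ, ∀ x, |u x| ≤ C) (hcont : Continuous u)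
    (a b : ℝ) (hab : a < b)
    (hm1 : ∀ x ∈ Set.Icc a b, u x = -1)
    (hineq : (∫ y : ℝ, bbmK (b - y) * (u y + u y ^ 2 / 2)) ≤
      ∫ y : ℝ, bbmK (a - y) * (u y + u y ^ 2 / 2)) :
    ∀ x : ℝ, u x = -1 := by
  obtain ⟨C, hC⟩ := hbdd
  set g : ℝ → ℝ := fun y ↦ (u y + 1) ^ 2 / 2
  have hg_cont : Continuous g := by fun_prop
  have hg_bdd : ∀ y, |g y| ≤ (C + 1) ^ 2 / 2 := fun y ↦ by
    have := abs_le.mp (hC y)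
    rw [abs_of_nonneg (by positivity)]
    show (u y + 1) ^ 2 / 2 ≤ (C + 1) ^ 2 / 2
    nlinarith
  have hg_int := integrable_bbmK_sub_mul hg_cont.aestronglyMeasurable hg_bdd
  have hrepr (x : ℝ) :
      ∫ y, bbmK (x - y) * (u y + u y ^ 2 / 2) = ∫ y, bbmK (x - y) * g y := by
    rw [← integral_bbmK_sub_mul_add_const hg_cont.aestronglyMeasurable hg_bdd x (-1 / 2)]
    congr with y
    ring
  rw [hrepr, hrepr, ← sub_nonpos, ← integral_sub (hg_int b) (hg_int a)] at hineq
  have hg_zero : g = 0 :=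
    eq_zero_of_integral_mul_nonpos (μ := volume) (s := Icc a b)
      (w := fun y ↦ bbmK (b - y) - bbmK (a - y)) hg_cont (fun y ↦ by positivity)
      (fun y hy ↦ by simp [g, hm1 y hy])
      (fun y hy ↦ sub_pos.mpr (bbmK_sub_lt_of_notMem_Icc hab hy))
      (by simp_rw [sub_mul]; exact (hg_int b).sub (hg_int a))
      (by simpa only [sub_mul] using hineq)
  intro x
  have hx : (u x + 1) ^ 2 / 2 = 0 := congrFun hg_zero x
  nlinarith [sq_nonneg (u x + 1)]
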